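/- Let (M,d) be a cone metric space over a normal cone P with normal constant K, and (xₙ) a sequence in M. Then (xₙ) is Cauchy (in the cone sense: for every c ∈ E with 0 ≪ c there is n₀ such that d(xₙ,xₘ) ≪ c for all n,m ≥ n₀) if and only if lim_{n,m→∞} ‖d(xₙ,xₘ)‖ = 0. -/

import Mathlib

open Filter Topology

variable {E : Type*}

/-- A cone in a real Banach space. -/
def IsCone [NormedAddCommGroup E] [NormedSpace ℝ E] (P : Set E) : Prop :=
  IsClosed P ∧ P.Nonempty ∧ P ≠ {0} ∧
  (∀ (a b : ℝ), 0 ≤ a → 0 ≤ b → ∀ x ∈ P, ∀ y ∈ P, a • x + b • y ∈ P) ∧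
  (∀ x, x ∈ P → -x ∈ P → x = 0)

/-- The partial order induced by the cone `P`: `x ≤ y` iff `y - x ∈ P`. -/
def coneLe [NormedAddCommGroup E] (P : Set E) (x y : E) : Prop := y - x ∈ P

/-- `x ≪ y` iff `y - x ∈ int P`. -/
def coneLt [NormedAddCommGroup E] (P : Set E) (x y : E) : Prop := y - x ∈ interior P

/-- A normal cone with normal constant `K`. -/
def IsNormalCone [NormedAddCommGroup E] (P : Set E) (K : ℝ) : Prop :=
  0 < K ∧ ∀ x y : E, coneLe P 0 x → coneLe P x y → ‖x‖ ≤ K * ‖y‖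

/-- A cone metric on `M` with values in `E`, relative to the cone `P`. -/
def IsConeMetric [NormedAddCommGroup E] {M : Type*} (P : Set E) (d : M → M → E) : Prop :=
  (∀ x y : M, coneLe P 0 (d x y)) ∧
  (∀ x y : M, d x y = 0 ↔ x = y) ∧
  (∀ x y : M, d x y = d y x) ∧
  (∀ x y z : M, coneLe P (d x y) (d x z + d z y))

/-- Convergence of a sequence in a cone metric space. -/
def ConeConverges [NormedAddCommGroup E] {M : Type*} (P : Set E) (d : M → M → E)
    (s : ℕ → M) (x : M) : Prop :=
  ∀ c : E, coneLt P 0 c → ∃ n₀ : ℕ, ∀ n > n₀, coneLt P (d (s n) x) c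

/-- Cauchy sequence in a cone metric space. -/
def ConeCauchy [NormedAddCommGroup E] {M : Type*} (P : Set E) (d : M → M → E)
    (s : ℕ → M) : Prop :=
  ∀ c : E, coneLt P 0 c → ∃ n₀ : ℕ, ∀ n ≥ n₀, ∀ m ≥ n₀, coneLt P (d (s n) (s m)) c

/-- Completeness of a cone metric space. -/
def ConeComplete [NormedAddCommGroup E] {M : Type*} (P : Set E) (d : M → M → E) : Prop :=
  ∀ s : ℕ → M, ConeCauchy P d s → ∃ x : M, ConeConverges P d s x

/-- Continuity of a self-map of a cone metric space. -/
def ConeContinuous [NormedAddCommGroup E] {M : Type*} (P : Set E) (d : M → M → E)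
    (T : M → M) : Prop :=
  ∀ (s : ℕ → M) (x : M), ConeConverges P d s x → ConeConverges P d (fun n => T (s n)) (T x)

/-- `T` is subsequentially convergent. -/
def SubseqConvergent [NormedAddCommGroup E] {M : Type*} (P : Set E) (d : M → M → E)
    (T : M → M) : Prop :=
  ∀ s : ℕ → M, (∃ y, ConeConverges P d (fun n => T (s n)) y) →
    ∃ φ : ℕ → ℕ, StrictMono φ ∧ ∃ z, ConeConverges P d (fun n => s (φ n)) z

/-- `T` is sequentially convergent. -/
def SeqConvergent [NormedAddCommGroup E] {M : Type*} (P : Set E) (d : M → M → E)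
    (T : M → M) : Prop :=
  ∀ s : ℕ → M, (∃ y, ConeConverges P d (fun n => T (s n)) y) →
    ∃ z, ConeConverges P d s z

/-- `S` is a `T`-Zamfirescu mapping. -/
def TZamfirescu [NormedAddCommGroup E] [NormedSpace ℝ E] {M : Type*} (P : Set E)
    (d : M → M → E) (T S : M → M) : Prop :=
  ∃ a b c : ℝ, 0 ≤ a ∧ a < 1 ∧ 0 ≤ b ∧ b < 1/2 ∧ 0 ≤ c ∧ c < 1/2 ∧
    ∀ x y : M,
      coneLe P (d (T (S x)) (T (S y))) (a • d (T x) (T y)) ∨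
      coneLe P (d (T (S x)) (T (S y))) (b • (d (T x) (T (S x)) + d (T y) (T (S y)))) ∨
      coneLe P (d (T (S x)) (T (S y))) (c • (d (T x) (T (S y)) + d (T y) (T (S x))))

/-- `S` is a `T`-weak contraction. -/
def TWeakContraction [NormedAddCommGroup E] [NormedSpace ℝ E] {M : Type*} (P : Set E)
    (d : M → M → E) (T S : M → M) : Prop :=
  ∃ δ L : ℝ, 0 < δ ∧ δ < 1 ∧ 0 ≤ L ∧
    ∀ x y : M, coneLe P (d (T (S x)) (T (S y))) (δ • d (T x) (T y) + L • d (T y) (T (S x)))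

/-!
If `0 ≪ c` then `c + B(0, r) ⊆ int P` for some `r > 0`, so `‖d(xₙ, xₘ)‖ → 0` forces `d(xₙ, xₘ) ≪ c`.
Conversely, scaling an interior point of `P` gives `0 ≪ c` with `‖c‖` arbitrarily small, and
normality turns `0 ≤ d(xₙ, xₘ) ≪ c` into `‖d(xₙ, xₘ)‖ ≤ K ‖c‖`.
-/

namespace IsCone

open Pointwise

variable [NormedAddCommGroup E] [NormedSpace ℝ E] {P : Set E}

theorem smul_mem (hP : IsCone P) {t : ℝ} (ht : 0 ≤ t) {x : E} (hx : x ∈ P) : t • x ∈ P := by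
  simpa using hP.2.2.2.1 t 0 ht le_rfl x hx x hx

theorem smul_mem_interior (hP : IsCone P) {t : ℝ} (ht : 0 < t) {x : E} (hx : x ∈ interior P) :
    t • x ∈ interior P := by
  have hsub : t • P ⊆ P := by
    rintro _ ⟨y, hy, rfl⟩
    exact hP.smul_mem ht.le hy
  apply interior_mono hsub
  rw [interior_smul₀ ht.ne']
  exact Set.smul_mem_smul_set hx

theorem exists_zero_coneLt_norm_lt (hP : IsCone P) (hint : (interior P).Nonempty) {δ : ℝ}
    (hδ : 0 < δ) : ∃ c, coneLt P 0 c ∧ ‖c‖ < δ := by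
  obtain ⟨c₀, hc₀⟩ := hint
  set t := δ / (‖c₀‖ + 1)
  have ht : 0 < t := by positivity
  refine ⟨t • c₀, by simpa [coneLt] using hP.smul_mem_interior ht hc₀, ?_⟩
  calc ‖t • c₀‖ = t * ‖c₀‖ := by rw [norm_smul, Real.norm_of_nonneg ht.le]
    _ < t * (‖c₀‖ + 1) := by gcongr; linarith
    _ = δ := div_mul_cancel₀ δ (by positivity)

end IsCone

section ConeOrder

variable {α : Type*} [NormedAddCommGroup E] {P : Set E} {l : Filter α} {u : α → E}

theorem eventually_coneLt_of_tendsto_zero (hu : Tendsto u l (𝓝 0)) {c : E}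
    (hc : coneLt P 0 c) : ∀ᶠ a in l, coneLt P (u a) c := by
  have hlim : Tendsto (fun a => c - u a) l (𝓝 c) := by
    simpa using tendsto_const_nhds.sub hu
  exact hlim.eventually (isOpen_interior.mem_nhds (by simpa [coneLt] using hc))

theorem IsNormalCone.norm_le_of_coneLt {K : ℝ} (hK : IsNormalCone P K) {x c : E}
    (hx : coneLe P 0 x) (hxc : coneLt P x c) : ‖x‖ ≤ K * ‖c‖ :=
  hK.2 x c hx (interior_subset hxc)

theorem tendsto_zero_of_eventually_coneLt [NormedSpace ℝ E] {K : ℝ} (hP : IsCone P)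
    (hint : (interior P).Nonempty) (hK : IsNormalCone P K) (hu : ∀ a, coneLe P 0 (u a))
    (h : ∀ c, coneLt P 0 c → ∀ᶠ a in l, coneLt P (u a) c) : Tendsto u l (𝓝 0) := by
  refine Metric.tendsto_nhds.2 fun ε hε => ?_
  obtain ⟨c, hc, hcε⟩ := hP.exists_zero_coneLt_norm_lt hint (div_pos hε hK.1)
  filter_upwards [h c hc] with a ha
  calc dist (u a) 0 = ‖u a‖ := dist_zero_right _
    _ ≤ K * ‖c‖ := hK.norm_le_of_coneLt (hu a) ha
    _ < K * (ε / K) := by gcongr; exact hK.1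
    _ = ε := mul_div_cancel₀ ε hK.1.ne'

theorem tendsto_zero_iff_eventually_coneLt [NormedSpace ℝ E] {K : ℝ} (hP : IsCone P)
    (hint : (interior P).Nonempty) (hK : IsNormalCone P K) (hu : ∀ a, coneLe P 0 (u a)) :
    Tendsto u l (𝓝 0) ↔ ∀ c, coneLt P 0 c → ∀ᶠ a in l, coneLt P (u a) c :=
  ⟨fun h _ hc => eventually_coneLt_of_tendsto_zero h hc,
    tendsto_zero_of_eventually_coneLt hP hint hK hu⟩

end ConeOrder

theorem coneCauchy_iff_eventually {M : Type*} [NormedAddCommGroup E] {P : Set E}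
    {d : M → M → E} {s : ℕ → M} :
    ConeCauchy P d s ↔
      ∀ c, coneLt P 0 c → ∀ᶠ p : ℕ × ℕ in atTop, coneLt P (d (s p.1) (s p.2)) c := by
  simp only [ConeCauchy, eventually_atTop_prod_self']

theorem cone_cauchy_iff_norm_tendsto_zero_general {E M : Type*} [NormedAddCommGroup E]
    [NormedSpace ℝ E] (P : Set E) (K : ℝ) (hP : IsCone P)
    (hint : (interior P).Nonempty) (hK : IsNormalCone P K)
    (d : M → M → E) (hd : IsConeMetric P d) (s : ℕ → M) :
    ConeCauchy P d s ↔
      Filter.Tendsto (fun p : ℕ × ℕ => ‖d (s p.1) (s p.2)‖)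
        Filter.atTop (nhds 0) := by
  rw [coneCauchy_iff_eventually, ← tendsto_zero_iff_norm_tendsto_zero]
  exact (tendsto_zero_iff_eventually_coneLt hP hint hK fun p => hd.1 _ _).symm

theorem cone_cauchy_iff_norm_tendsto_zero {E M : Type*} [NormedAddCommGroup E]
    [NormedSpace ℝ E] [CompleteSpace E] (P : Set E) (K : ℝ) (hP : IsCone P)
    (hint : (interior P).Nonempty) (hK : IsNormalCone P K)
    (d : M → M → E) (hd : IsConeMetric P d) (s : ℕ → M) :
    ConeCauchy P d s ↔
      Filter.Tendsto (fun p : ℕ × ℕ => ‖d (s p.1) (s p.2)‖)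
        Filter.atTop (nhds 0) :=
  cone_cauchy_iff_norm_tendsto_zero_general P K hP hint hK d hd s
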